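/- Let A_1, ..., A_n be anticommuting self-adjoint unitaries on ℂ^{2^n}. The dichotomic steering functional F^dicho = {A_x} satisfies: for every LHS dichotomic assemblage σ_x = Σ_λ q_λ I(x,λ) σ_λ with I(x,λ) ∈ [−1,1], |Σ_x Tr(A_x σ_x)| ≤ sqrt(2n), while the dichotomic assemblage σ_x = A_x/2^n gives Σ_x Tr(A_x σ_x) = n; hence V(F^dicho) ≥ sqrt(n/2). -/

import Mathlib

noncomputable section

/-- The trace of a continuous linear operator on `ℂ^d`. -/
def trCLM {d : ℕ} (A : EuclideanSpace ℂ (Fin d) →L[ℂ] EuclideanSpace ℂ (Fin d)) : ℂ :=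
  LinearMap.trace ℂ (EuclideanSpace ℂ (Fin d)) A.toLinearMap

open scoped InnerProductSpace

abbrev Hd (d : ℕ) := EuclideanSpace ℂ (Fin d)

section TR
variable {d : ℕ}

lemma trCLM_add (X Y : Hd d →L[ℂ] Hd d) : trCLM (X + Y) = trCLM X + trCLM Y := by
  unfold trCLM
  rw [ContinuousLinearMap.coe_add, map_add]

lemma trCLM_sub (X Y : Hd d →L[ℂ] Hd d) : trCLM (X - Y) = trCLM X - trCLM Y := by
  unfold trCLM
  rw [ContinuousLinearMap.coe_sub, map_sub]

lemma trCLM_smul (z : ℂ) (X : Hd d →L[ℂ] Hd d) : trCLM (z • X) = z * trCLM X := by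
  unfold trCLM
  rw [ContinuousLinearMap.coe_smul, map_smul, smul_eq_mul]

lemma trCLM_sum {ι : Type*} (s : Finset ι) (f : ι → Hd d →L[ℂ] Hd d) :
    trCLM (∑ i ∈ s, f i) = ∑ i ∈ s, trCLM (f i) := by
  unfold trCLM
  rw [ContinuousLinearMap.coe_sum, map_sum]

lemma trCLM_one : trCLM (1 : Hd d →L[ℂ] Hd d) = (d : ℂ) := by
  unfold trCLM
  rw [ContinuousLinearMap.one_def, ContinuousLinearMap.coe_id]
  rw [show (LinearMap.id : Hd d →ₗ[ℂ] Hd d) = 1 from rfl, LinearMap.trace_one]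
  rw [finrank_euclideanSpace_fin]

lemma trCLM_mul_comm (X Y : Hd d →L[ℂ] Hd d) : trCLM (X * Y) = trCLM (Y * X) := by
  unfold trCLM
  rw [show ((X * Y : Hd d →L[ℂ] Hd d) : Hd d →ₗ[ℂ] Hd d) =
      (X : Hd d →ₗ[ℂ] Hd d) * (Y : Hd d →ₗ[ℂ] Hd d) from rfl,
    show ((Y * X : Hd d →L[ℂ] Hd d) : Hd d →ₗ[ℂ] Hd d) =
      (Y : Hd d →ₗ[ℂ] Hd d) * (X : Hd d →ₗ[ℂ] Hd d) from rfl]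
  exact LinearMap.trace_mul_comm ℂ _ _

lemma trCLM_eq_sum_inner (T : Hd d →L[ℂ] Hd d)
    (b : OrthonormalBasis (Fin d) ℂ (Hd d)) :
    trCLM T = ∑ i, ⟪b i, T (b i)⟫_ℂ := by
  rw [trCLM, LinearMap.trace_eq_matrix_trace ℂ b.toBasis, Matrix.trace]
  congr 1
  ext i
  rw [Matrix.diag_apply, LinearMap.toMatrix_apply, b.coe_toBasis,
    b.coe_toBasis_repr_apply, b.repr_apply_apply]
  rfl

lemma abs_re_trCLM_mul_le (B σ : Hd d →L[ℂ] Hd d)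
    (hσ : σ.IsPositive) (K : ℝ) (hBv : ∀ v, ‖B v‖ ≤ K * ‖v‖) :
    |(trCLM (B * σ)).re| ≤ K * (trCLM σ).re := by
  have hsym : σ.toLinearMap.IsSymmetric :=
    hσ.1
  have hn : Module.finrank ℂ (Hd d) = d := finrank_euclideanSpace_fin
  set b := hsym.eigenvectorBasis hn with hb
  set μ := hsym.eigenvalues hn with hμ
  have happ : ∀ i, σ (b i) = (μ i : ℂ) • b i := fun i => hsym.apply_eigenvectorBasis hn i
  have hnormb : ∀ i, ‖b i‖ = 1 := fun i => b.orthonormal.1 i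
  have hμnn : ∀ i, 0 ≤ μ i := by
    intro i
    have h0 := hσ.2 (b i)
    rw [ContinuousLinearMap.reApplyInnerSelf] at h0
    have : ⟪σ (b i), b i⟫_ℂ = (μ i : ℂ) := by
      rw [happ i, inner_smul_left, orthonormal_iff_ite.mp b.orthonormal i i]
      simp [Complex.conj_ofReal]
    rw [this] at h0
    simpa using h0
  have htr1 : (trCLM (B * σ)).re = ∑ i, μ i * (⟪b i, B (b i)⟫_ℂ).re := by
    rw [trCLM_eq_sum_inner _ b, Complex.re_sum]
    congr 1; ext i
    rw [ContinuousLinearMap.mul_apply, happ i, map_smul, inner_smul_right,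
      Complex.re_ofReal_mul]
  have htr2 : (trCLM σ).re = ∑ i, μ i := by
    rw [trCLM_eq_sum_inner _ b, Complex.re_sum]
    congr 1; ext i
    rw [happ i, inner_smul_right, orthonormal_iff_ite.mp b.orthonormal i i]
    simp
  have hbound : ∀ i, |(⟪b i, B (b i)⟫_ℂ).re| ≤ K := by
    intro i
    calc |(⟪b i, B (b i)⟫_ℂ).re| ≤ ‖⟪b i, B (b i)⟫_ℂ‖ := Complex.abs_re_le_norm _
      _ ≤ ‖b i‖ * ‖B (b i)‖ := norm_inner_le_norm _ _
      _ ≤ 1 * (K * 1) := by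
          rw [hnormb i]
          have := hBv (b i)
          rw [hnormb i] at this
          simpa using this
      _ = K := by ring
  rw [htr1, htr2, Finset.mul_sum]
  calc |∑ i, μ i * (⟪b i, B (b i)⟫_ℂ).re| ≤ ∑ i, |μ i * (⟪b i, B (b i)⟫_ℂ).re| :=
        Finset.abs_sum_le_sum_abs _ _
    _ ≤ ∑ i, K * μ i := by
        apply Finset.sum_le_sum
        intro i _
        rw [abs_mul, abs_of_nonneg (hμnn i), mul_comm (K) (μ i)]
        exact mul_le_mul_of_nonneg_left (hbound i) (hμnn i)
end TR

section AC
variable {d n : ℕ} (A : Fin n → Hd d →L[ℂ] Hd d)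

lemma sum_smul_selfAdjoint (hsa : ∀ i, IsSelfAdjoint (A i)) (c : Fin n → ℝ) :
    IsSelfAdjoint (∑ x, (c x : ℂ) • A x) := by
  show star _ = _
  rw [ContinuousLinearMap.star_eq_adjoint, map_sum]
  refine Finset.sum_congr rfl fun x _ => ?_
  rw [LinearIsometryEquiv.map_smulₛₗ, starRingEnd_apply, Complex.star_def,
    Complex.conj_ofReal, ← ContinuousLinearMap.star_eq_adjoint, (hsa x).star_eq]

lemma mul_self_sum_smul
    (hacr : ∀ i j, A i * A j + A j * A i =
      if i = j then (2 : ℂ) • (1 : Hd d →L[ℂ] Hd d) else 0)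
    (c : Fin n → ℝ) :
    (∑ x, (c x : ℂ) • A x) * (∑ y, (c y : ℂ) • A y) =
      ((∑ x, c x ^ 2 : ℝ) : ℂ) • 1 := by
  have expand : (∑ x, (c x : ℂ) • A x) * (∑ y, (c y : ℂ) • A y) =
      ∑ x, ∑ y, ((c x : ℂ) * (c y : ℂ)) • (A x * A y) := by
    rw [Finset.sum_mul]
    refine Finset.sum_congr rfl fun x _ => ?_
    rw [Finset.mul_sum]
    refine Finset.sum_congr rfl fun y _ => ?_
    rw [smul_mul_assoc, mul_smul_comm, smul_smul]
  have swap : (∑ x, ∑ y, ((c x : ℂ) * (c y : ℂ)) • (A x * A y)) =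
      ∑ x, ∑ y, ((c x : ℂ) * (c y : ℂ)) • (A y * A x) := by
    rw [Finset.sum_comm]
    refine Finset.sum_congr rfl fun x _ => Finset.sum_congr rfl fun y _ => ?_
    rw [mul_comm ((c x : ℂ)) ((c y : ℂ))]
  have hdouble : (∑ x, ∑ y, ((c x : ℂ) * (c y : ℂ)) • (A x * A y)) +
      (∑ x, ∑ y, ((c x : ℂ) * (c y : ℂ)) • (A x * A y)) =
      ∑ x, ∑ y, ((c x : ℂ) * (c y : ℂ)) • (A x * A y + A y * A x) := by
    nth_rewrite 2 [swap]
    rw [← Finset.sum_add_distrib]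
    refine Finset.sum_congr rfl fun x _ => ?_
    rw [← Finset.sum_add_distrib]
    refine Finset.sum_congr rfl fun y _ => ?_
    module
  have hite : (∑ x, ∑ y, ((c x : ℂ) * (c y : ℂ)) • (A x * A y + A y * A x)) =
      ∑ x, ((c x : ℂ) * (c x : ℂ)) • ((2:ℂ) • (1 : Hd d →L[ℂ] Hd d)) := by
    refine Finset.sum_congr rfl fun x _ => ?_
    rw [Finset.sum_eq_single x]
    · rw [hacr x x, if_pos rfl]
    · intro y _ hxy
      rw [hacr x y, if_neg (fun h => hxy h.symm)]
      module
    · intro h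
      exact absurd (Finset.mem_univ x) h
  have hsingle : ∀ x : Fin n, ((c x : ℂ) * (c x : ℂ)) • ((2:ℂ) • (1 : Hd d →L[ℂ] Hd d)) =
      (((c x ^ 2 : ℝ) : ℂ) • (1 : Hd d →L[ℂ] Hd d)) +
      (((c x ^ 2 : ℝ) : ℂ) • (1 : Hd d →L[ℂ] Hd d)) := by
    intro x
    push_cast
    module
  have hfinal : (∑ x, ∑ y, ((c x : ℂ) * (c y : ℂ)) • (A x * A y)) +
      (∑ x, ∑ y, ((c x : ℂ) * (c y : ℂ)) • (A x * A y)) =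
      (((∑ x, c x ^ 2 : ℝ) : ℂ) • (1 : Hd d →L[ℂ] Hd d)) +
      (((∑ x, c x ^ 2 : ℝ) : ℂ) • (1 : Hd d →L[ℂ] Hd d)) := by
    rw [hdouble, hite, Finset.sum_congr rfl (fun x _ => hsingle x),
      Finset.sum_add_distrib]
    congr 1 <;>
    · rw [← Finset.sum_smul]
      congr 1
      push_cast
      rfl
  rw [expand]
  calc (∑ x, ∑ y, ((c x : ℂ) * (c y : ℂ)) • (A x * A y)) =
      (2:ℂ)⁻¹ • ((∑ x, ∑ y, ((c x : ℂ) * (c y : ℂ)) • (A x * A y)) +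
        (∑ x, ∑ y, ((c x : ℂ) * (c y : ℂ)) • (A x * A y))) := by module
    _ = (2:ℂ)⁻¹ • ((((∑ x, c x ^ 2 : ℝ) : ℂ) • (1 : Hd d →L[ℂ] Hd d)) +
        (((∑ x, c x ^ 2 : ℝ) : ℂ) • (1 : Hd d →L[ℂ] Hd d))) := by rw [hfinal]
    _ = ((∑ x, c x ^ 2 : ℝ) : ℂ) • 1 := by module

lemma norm_sum_smul_apply_le (hsa : ∀ i, IsSelfAdjoint (A i))
    (hacr : ∀ i j, A i * A j + A j * A i =
      if i = j then (2 : ℂ) • (1 : Hd d →L[ℂ] Hd d) else 0)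
    (c : Fin n → ℝ) (hc : ∀ x, |c x| ≤ 1) (v : Hd d) :
    ‖(∑ x, (c x : ℂ) • A x) v‖ ≤ Real.sqrt n * ‖v‖ := by
  set B := ∑ x, (c x : ℂ) • A x with hB
  have hsym : B.toLinearMap.IsSymmetric :=
    ContinuousLinearMap.isSelfAdjoint_iff_isSymmetric.mp (sum_smul_selfAdjoint A hsa c)
  have hsq : ‖B v‖ ^ 2 = (∑ x, c x ^ 2) * ‖v‖ ^ 2 := by
    have h1 : (⟪B v, B v⟫_ℂ) = ⟪v, (B * B) v⟫_ℂ := by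
      rw [ContinuousLinearMap.mul_apply]
      exact hsym v (B v)
    rw [mul_self_sum_smul A hacr c] at h1
    rw [inner_self_eq_norm_sq_to_K, ContinuousLinearMap.smul_apply,
      ContinuousLinearMap.one_apply, inner_smul_right, inner_self_eq_norm_sq_to_K] at h1
    rw [← Complex.ofReal_inj, Complex.ofReal_mul, Complex.ofReal_pow, Complex.ofReal_pow]
    exact h1
  have hcn : (∑ x, c x ^ 2) ≤ (n : ℝ) := by
    calc (∑ x, c x ^ 2) ≤ ∑ _x : Fin n, (1:ℝ) := by
          refine Finset.sum_le_sum fun x _ => ?_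
          have := hc x
          nlinarith [abs_nonneg (c x), sq_abs (c x)]
      _ = n := by simp
  have h4 : ‖B v‖ ^ 2 ≤ (n : ℝ) * ‖v‖ ^ 2 := by
    rw [hsq]
    exact mul_le_mul_of_nonneg_right hcn (sq_nonneg _)
  nlinarith [norm_nonneg (B v), Real.sq_sqrt (Nat.cast_nonneg (α := ℝ) n),
    Real.sqrt_nonneg (n:ℝ), norm_nonneg v, mul_nonneg (Real.sqrt_nonneg (n:ℝ)) (norm_nonneg v)]

lemma sq_A_eq_one
    (hacr : ∀ i j, A i * A j + A j * A i =
      if i = j then (2 : ℂ) • (1 : Hd d →L[ℂ] Hd d) else 0)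
    (x : Fin n) : A x * A x = 1 := by
  have h := hacr x x
  rw [if_pos rfl] at h
  calc A x * A x = (2:ℂ)⁻¹ • (A x * A x + A x * A x) := by module
    _ = (2:ℂ)⁻¹ • ((2:ℂ) • (1 : Hd d →L[ℂ] Hd d)) := by rw [h]
    _ = 1 := by module

lemma norm_A_apply (hsa : ∀ i, IsSelfAdjoint (A i))
    (hacr : ∀ i j, A i * A j + A j * A i =
      if i = j then (2 : ℂ) • (1 : Hd d →L[ℂ] Hd d) else 0)
    (x : Fin n) (v : Hd d) : ‖A x v‖ = ‖v‖ := by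
  have hsym : (A x).toLinearMap.IsSymmetric :=
    ContinuousLinearMap.isSelfAdjoint_iff_isSymmetric.mp (hsa x)
  have h1 : (⟪A x v, A x v⟫_ℂ) = ⟪v, (A x * A x) v⟫_ℂ := by
    rw [ContinuousLinearMap.mul_apply]
    exact hsym v (A x v)
  rw [sq_A_eq_one A hacr x, ContinuousLinearMap.one_apply,
    inner_self_eq_norm_sq_to_K, inner_self_eq_norm_sq_to_K] at h1
  have h2 : ‖A x v‖ ^ 2 = ‖v‖ ^ 2 := by exact_mod_cast h1
  calc ‖A x v‖ = Real.sqrt (‖A x v‖ ^ 2) := (Real.sqrt_sq (norm_nonneg _)).symm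
    _ = Real.sqrt (‖v‖ ^ 2) := by rw [h2]
    _ = ‖v‖ := Real.sqrt_sq (norm_nonneg _)

end AC


lemma trCLM_zero {d : ℕ} : trCLM (0 : Hd d →L[ℂ] Hd d) = 0 := by
  unfold trCLM
  rw [ContinuousLinearMap.coe_zero, map_zero]

section PROJ
variable {d : ℕ}

lemma proj_isPositive (v : Hd d) :
    (((innerSL ℂ) v).smulRight v).IsPositive := by
  constructor
  · intro u w
    simp only [ContinuousLinearMap.coe_coe, ContinuousLinearMap.smulRight_apply,
      innerSL_apply_apply, inner_smul_left, inner_smul_right, inner_conj_symm]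
    ring
  · intro u
    rw [ContinuousLinearMap.reApplyInnerSelf]
    simp only [ContinuousLinearMap.smulRight_apply, innerSL_apply_apply, inner_smul_left,
      inner_conj_symm]
    rw [show ⟪u,v⟫_ℂ = (starRingEnd ℂ) ⟪v,u⟫_ℂ from (inner_conj_symm _ _).symm,
      ← Complex.normSq_eq_conj_mul_self]
    simp [Complex.normSq_nonneg]

lemma trCLM_mul_proj (T : Hd d →L[ℂ] Hd d) (v : Hd d) :
    trCLM (T * ((innerSL ℂ) v).smulRight v) = ⟪v, T v⟫_ℂ := by
  rw [trCLM_eq_sum_inner _ (EuclideanSpace.basisFun (Fin d) ℂ)]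
  simp only [ContinuousLinearMap.mul_apply, ContinuousLinearMap.smulRight_apply,
    innerSL_apply_apply, map_smul, inner_smul_right]
  exact (EuclideanSpace.basisFun (Fin d) ℂ).sum_inner_mul_inner v (T v)

lemma trCLM_proj (v : Hd d) :
    trCLM (((innerSL ℂ) v).smulRight v) = ⟪v, v⟫_ℂ := by
  rw [trCLM_eq_sum_inner _ (EuclideanSpace.basisFun (Fin d) ℂ)]
  simp only [ContinuousLinearMap.smulRight_apply, innerSL_apply_apply, inner_smul_right]
  exact (EuclideanSpace.basisFun (Fin d) ℂ).sum_inner_mul_inner v v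

lemma smul_one_isPositive (r : ℝ) (hr : 0 ≤ r) :
    (((r : ℝ) : ℂ) • (1 : Hd d →L[ℂ] Hd d)).IsPositive := by
  constructor
  · have hone : IsSelfAdjoint (1 : Hd d →L[ℂ] Hd d) := by
      show star _ = _
      rw [ContinuousLinearMap.star_eq_adjoint, ContinuousLinearMap.one_def,
        ContinuousLinearMap.adjoint_id]
    have hrsa : IsSelfAdjoint ((r : ℝ) : ℂ) := by
      rw [IsSelfAdjoint, Complex.star_def, Complex.conj_ofReal]
    exact ContinuousLinearMap.isSelfAdjoint_iff_isSymmetric.mp (hrsa.smul hone)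
  · intro u
    rw [ContinuousLinearMap.reApplyInnerSelf]
    simp only [ContinuousLinearMap.smul_apply, ContinuousLinearMap.one_apply,
      inner_smul_left, Complex.conj_ofReal]
    have h1 : ⟪u, u⟫_ℂ = ((‖u‖ ^ 2 : ℝ) : ℂ) := by
      rw [inner_self_eq_norm_sq_to_K]
      norm_cast
    rw [h1, ← Complex.ofReal_mul]
    simp only [Complex.ofReal_re, RCLike.re_to_complex]
    positivity

end PROJ

section MAIN
variable {n : ℕ}

lemma lhs_bound (A : Fin n → Hd (2 ^ n) →L[ℂ] Hd (2 ^ n))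
    (hsa : ∀ i, IsSelfAdjoint (A i))
    (hacr : ∀ i j, A i * A j + A j * A i =
      if i = j then (2 : ℂ) • (1 : Hd (2 ^ n) →L[ℂ] Hd (2 ^ n)) else 0)
    (L : ℕ) (q : Fin L → ℝ) (Ix : Fin L → Fin n → ℝ)
    (σl : Fin L → Hd (2 ^ n) →L[ℂ] Hd (2 ^ n))
    (hq : ∀ l, 0 ≤ q l) (hq1 : ∑ l, q l = 1) (hIx : ∀ l x, |Ix l x| ≤ 1)
    (hpos : ∀ l, (σl l).IsPositive) (htr : ∀ l, trCLM (σl l) = 1) :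
    |∑ x, (trCLM (A x * (∑ l, ((q l * Ix l x : ℝ) : ℂ) • σl l))).re| ≤
      Real.sqrt (2 * (n : ℝ)) := by
  have key : ∀ l, |∑ x, Ix l x * (trCLM (A x * σl l)).re| ≤ Real.sqrt n := by
    intro l
    have hB := abs_re_trCLM_mul_le (∑ x, (Ix l x : ℂ) • A x) (σl l) (hpos l)
      (Real.sqrt n) (norm_sum_smul_apply_le A hsa hacr (Ix l) (fun x => hIx l x))
    have hexp : trCLM ((∑ x, (Ix l x : ℂ) • A x) * σl l) =
        ∑ x, (Ix l x : ℂ) * trCLM (A x * σl l) := by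
      rw [Finset.sum_mul, trCLM_sum]
      refine Finset.sum_congr rfl fun x _ => ?_
      rw [smul_mul_assoc, trCLM_smul]
    rw [hexp, htr l] at hB
    simp only [Complex.one_re, mul_one] at hB
    have hre : (∑ x, (Ix l x : ℂ) * trCLM (A x * σl l)).re =
        ∑ x, Ix l x * (trCLM (A x * σl l)).re := by
      rw [Complex.re_sum]
      exact Finset.sum_congr rfl fun x _ => Complex.re_ofReal_mul _ _
    rwa [hre] at hB
  have hswap : ∑ x, (trCLM (A x * (∑ l, ((q l * Ix l x : ℝ) : ℂ) • σl l))).re =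
      ∑ l, q l * (∑ x, Ix l x * (trCLM (A x * σl l)).re) := by
    have hx : ∀ x, (trCLM (A x * (∑ l, ((q l * Ix l x : ℝ) : ℂ) • σl l))).re =
        ∑ l, q l * (Ix l x * (trCLM (A x * σl l)).re) := by
      intro x
      rw [Finset.mul_sum, trCLM_sum, Complex.re_sum]
      refine Finset.sum_congr rfl fun l _ => ?_
      rw [mul_smul_comm, trCLM_smul, Complex.re_ofReal_mul]
      ring
    rw [Finset.sum_congr rfl (fun x _ => hx x), Finset.sum_comm]
    refine Finset.sum_congr rfl fun l _ => ?_
    rw [Finset.mul_sum]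
  rw [hswap]
  calc |∑ l, q l * (∑ x, Ix l x * (trCLM (A x * σl l)).re)|
      ≤ ∑ l, |q l * (∑ x, Ix l x * (trCLM (A x * σl l)).re)| :=
        Finset.abs_sum_le_sum_abs _ _
    _ ≤ ∑ l, q l * Real.sqrt n := by
        refine Finset.sum_le_sum fun l _ => ?_
        rw [abs_mul, abs_of_nonneg (hq l)]
        exact mul_le_mul_of_nonneg_left (key l) (hq l)
    _ = Real.sqrt n := by rw [← Finset.sum_mul, hq1, one_mul]
    _ ≤ Real.sqrt (2 * n) := by
        apply Real.sqrt_le_sqrt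
        nlinarith [Nat.cast_nonneg (α := ℝ) n]

lemma diag_value (A : Fin n → Hd (2 ^ n) →L[ℂ] Hd (2 ^ n))
    (hacr : ∀ i j, A i * A j + A j * A i =
      if i = j then (2 : ℂ) • (1 : Hd (2 ^ n) →L[ℂ] Hd (2 ^ n)) else 0)
    (x : Fin n) : (trCLM (A x * (((2 : ℂ) ^ n)⁻¹ • A x))).re = 1 := by
  rw [mul_smul_comm, trCLM_smul, sq_A_eq_one A hacr x, trCLM_one]
  have h2 : ((2:ℂ) ^ n)⁻¹ * ((2 ^ n : ℕ) : ℂ) = 1 := by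
    push_cast
    field_simp
  rw [h2]
  simp

end MAIN


lemma pos_smul_one_add {d n : ℕ} (A : Fin n → Hd d →L[ℂ] Hd d)
    (hsa : ∀ i, IsSelfAdjoint (A i))
    (hacr : ∀ i j, A i * A j + A j * A i =
      if i = j then (2 : ℂ) • (1 : Hd d →L[ℂ] Hd d) else 0)
    (x : Fin n) (r s : ℝ) (hr : 0 ≤ r) (hs : |s| ≤ 1) :
    (((r : ℝ) : ℂ) • (1 + ((s : ℝ) : ℂ) • A x)).IsPositive := by
  have hone : IsSelfAdjoint (1 : Hd d →L[ℂ] Hd d) := by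
    show star _ = _
    rw [ContinuousLinearMap.star_eq_adjoint, ContinuousLinearMap.one_def,
      ContinuousLinearMap.adjoint_id]
  have hssa : IsSelfAdjoint ((s : ℝ) : ℂ) := by
    rw [IsSelfAdjoint, Complex.star_def, Complex.conj_ofReal]
  have hrsa : IsSelfAdjoint ((r : ℝ) : ℂ) := by
    rw [IsSelfAdjoint, Complex.star_def, Complex.conj_ofReal]
  constructor
  · exact ContinuousLinearMap.isSelfAdjoint_iff_isSymmetric.mp
      (hrsa.smul (hone.add (hssa.smul (hsa x))))
  · intro u
    rw [ContinuousLinearMap.reApplyInnerSelf]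
    simp only [ContinuousLinearMap.smul_apply, ContinuousLinearMap.add_apply,
      ContinuousLinearMap.one_apply, inner_add_left, inner_smul_left,
      Complex.conj_ofReal, RCLike.re_to_complex]
    have h1 : ⟪u, u⟫_ℂ = ((‖u‖ ^ 2 : ℝ) : ℂ) := by
      rw [inner_self_eq_norm_sq_to_K]
      norm_cast
    have hinner : |(⟪A x u, u⟫_ℂ).re| ≤ ‖u‖ ^ 2 := by
      calc |(⟪A x u, u⟫_ℂ).re| ≤ ‖⟪A x u, u⟫_ℂ‖ := Complex.abs_re_le_norm _
        _ ≤ ‖A x u‖ * ‖u‖ := norm_inner_le_norm _ _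
        _ = ‖u‖ ^ 2 := by rw [norm_A_apply A hsa hacr]; ring
    rw [h1]
    rw [show ((r : ℝ) : ℂ) * (((‖u‖ ^ 2 : ℝ) : ℂ) + ((s : ℝ) : ℂ) * ⟪A x u, u⟫_ℂ) =
        ((r : ℝ) : ℂ) * ((‖u‖ ^ 2 : ℝ) : ℂ) +
        (((r * s : ℝ)) : ℂ) * ⟪A x u, u⟫_ℂ by push_cast; ring]
    rw [Complex.add_re, ← Complex.ofReal_mul, Complex.ofReal_re, Complex.re_ofReal_mul]
    have habs := abs_le.mp hs
    have habs2 := abs_le.mp hinner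
    have hst : -(‖u‖ ^ 2) ≤ s * (⟪A x u, u⟫_ℂ).re := by
      nlinarith [abs_nonneg s, abs_nonneg ((⟪A x u, u⟫_ℂ).re), neg_abs_le s,
        le_abs_self s, neg_abs_le ((⟪A x u, u⟫_ℂ).re), le_abs_self ((⟪A x u, u⟫_ℂ).re),
        mul_le_mul hs hinner (abs_nonneg _) zero_le_one, abs_mul s ((⟪A x u, u⟫_ℂ).re)]
    nlinarith [mul_nonneg hr (show (0:ℝ) ≤ ‖u‖ ^ 2 + s * (⟪A x u, u⟫_ℂ).re by nlinarith)]

lemma exists_unit_eigen {d n : ℕ} (A : Fin n → Hd d →L[ℂ] Hd d)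
    (hsa : ∀ i, IsSelfAdjoint (A i))
    (hacr : ∀ i j, A i * A j + A j * A i =
      if i = j then (2 : ℂ) • (1 : Hd d →L[ℂ] Hd d) else 0)
    (hd : 0 < d) (x : Fin n) :
    ∃ (v : Hd d) (μ : ℝ), ‖v‖ = 1 ∧ A x v = ((μ : ℝ) : ℂ) • v ∧ μ * μ = 1 := by
  have hsym : (A x).toLinearMap.IsSymmetric :=
    ContinuousLinearMap.isSelfAdjoint_iff_isSymmetric.mp (hsa x)
  have hn : Module.finrank ℂ (Hd d) = d := finrank_euclideanSpace_fin
  set b := hsym.eigenvectorBasis hn with hb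
  set μ := hsym.eigenvalues hn with hμ
  set i0 : Fin d := ⟨0, hd⟩
  refine ⟨b i0, μ i0, b.orthonormal.1 i0, hsym.apply_eigenvectorBasis hn i0, ?_⟩
  have happ : A x (b i0) = (μ i0 : ℂ) • b i0 := hsym.apply_eigenvectorBasis hn i0
  have h1 : A x (A x (b i0)) = ((μ i0 * μ i0 : ℝ) : ℂ) • b i0 := by
    rw [happ, map_smul, happ, smul_smul]
    push_cast
    ring_nf
  have h2 : A x (A x (b i0)) = b i0 := by
    rw [← ContinuousLinearMap.mul_apply, sq_A_eq_one A hacr x,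
      ContinuousLinearMap.one_apply]
  have hv0 : b i0 ≠ 0 := by
    intro hcon
    have := b.orthonormal.1 i0
    rw [hcon] at this
    simp at this
  have h3 : ((μ i0 * μ i0 : ℝ) : ℂ) = ((1 : ℝ) : ℂ) := by
    apply smul_left_injective ℂ hv0
    simp only
    rw [← h1, h2, Complex.ofReal_one, one_smul]
  exact_mod_cast h3

/-- For anticommuting self-adjoint unitaries `A x` on `ℂ^{2^n}`, the dichotomic steering
functional `F^dicho = {A x}` satisfies: every LHS dichotomic assemblage
`σ x = ∑ λ, q λ * I(x,λ) • σ λ` with `I(x,λ) ∈ [-1,1]` gives value at most `√(2n)` in modulus,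
while the dichotomic assemblage `σ x = A x / 2^n` gives value `n`; hence
`V(F^dicho) ≥ √(n/2)`. -/
theorem dichotomic_violation (n : ℕ)
    (A : Fin n → EuclideanSpace ℂ (Fin (2 ^ n)) →L[ℂ] EuclideanSpace ℂ (Fin (2 ^ n)))
    (hsa : ∀ i, IsSelfAdjoint (A i))
    (hacr : ∀ i j, A i * A j + A j * A i =
      if i = j then (2 : ℂ) • (1 : EuclideanSpace ℂ (Fin (2 ^ n)) →L[ℂ]
        EuclideanSpace ℂ (Fin (2 ^ n))) else 0) :
    (∀ (L : ℕ) (q : Fin L → ℝ) (Ix : Fin L → Fin n → ℝ)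
        (σl : Fin L → EuclideanSpace ℂ (Fin (2 ^ n)) →L[ℂ] EuclideanSpace ℂ (Fin (2 ^ n))),
        (∀ l, 0 ≤ q l) → (∑ l, q l = 1) → (∀ l x, |Ix l x| ≤ 1) →
        (∀ l, (σl l).IsPositive) → (∀ l, trCLM (σl l) = 1) →
        |∑ x, (trCLM (A x * (∑ l, ((q l * Ix l x : ℝ) : ℂ) • σl l))).re| ≤
          Real.sqrt (2 * (n : ℝ))) ∧
    (∑ x, (trCLM (A x * (((2 : ℂ) ^ n)⁻¹ • A x))).re = (n : ℝ)) ∧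
    sSup {r : ℝ | ∃ σ1 σ2 : Fin n →
            EuclideanSpace ℂ (Fin (2 ^ n)) →L[ℂ] EuclideanSpace ℂ (Fin (2 ^ n)),
          (∀ x, (σ1 x).IsPositive) ∧ (∀ x, (σ2 x).IsPositive) ∧
          (∀ x, trCLM (σ1 x) + trCLM (σ2 x) = 1) ∧
          r = |∑ x, (trCLM (A x * (σ1 x - σ2 x))).re|} /
      sSup {r : ℝ | ∃ (L : ℕ) (q : Fin L → ℝ) (Ix : Fin L → Fin n → ℝ)
            (σl : Fin L → EuclideanSpace ℂ (Fin (2 ^ n)) →L[ℂ]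
              EuclideanSpace ℂ (Fin (2 ^ n))),
          (∀ l, 0 ≤ q l) ∧ (∑ l, q l = 1) ∧ (∀ l x, |Ix l x| ≤ 1) ∧
          (∀ l, (σl l).IsPositive) ∧ (∀ l, trCLM (σl l) = 1) ∧
          r = |∑ x, (trCLM (A x * (∑ l, ((q l * Ix l x : ℝ) : ℂ) • σl l))).re|} ≥
      Real.sqrt ((n : ℝ) / 2) := by
  refine ⟨lhs_bound A hsa hacr, ?_, ?_⟩
  · rw [Finset.sum_congr rfl (fun x _ => diag_value A hacr x)]
    simp
  · set S1 := {r : ℝ | ∃ σ1 σ2 : Fin n →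
            EuclideanSpace ℂ (Fin (2 ^ n)) →L[ℂ] EuclideanSpace ℂ (Fin (2 ^ n)),
          (∀ x, (σ1 x).IsPositive) ∧ (∀ x, (σ2 x).IsPositive) ∧
          (∀ x, trCLM (σ1 x) + trCLM (σ2 x) = 1) ∧
          r = |∑ x, (trCLM (A x * (σ1 x - σ2 x))).re|} with hS1def
    set S2 := {r : ℝ | ∃ (L : ℕ) (q : Fin L → ℝ) (Ix : Fin L → Fin n → ℝ)
            (σl : Fin L → EuclideanSpace ℂ (Fin (2 ^ n)) →L[ℂ]
              EuclideanSpace ℂ (Fin (2 ^ n))),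
          (∀ l, 0 ≤ q l) ∧ (∑ l, q l = 1) ∧ (∀ l x, |Ix l x| ≤ 1) ∧
          (∀ l, (σl l).IsPositive) ∧ (∀ l, trCLM (σl l) = 1) ∧
          r = |∑ x, (trCLM (A x * (∑ l, ((q l * Ix l x : ℝ) : ℂ) • σl l))).re|} with hS2def
    -- S2 is bounded above by √(2n)
    have hS2ub : ∀ r ∈ S2, r ≤ Real.sqrt (2 * (n : ℝ)) := by
      rintro r ⟨L, q, Ix, σl, hq, hq1, hIx, hpos, htr, rfl⟩
      exact lhs_bound A hsa hacr L q Ix σl hq hq1 hIx hpos htr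
    have hS2bdd : BddAbove S2 := ⟨Real.sqrt (2 * (n : ℝ)), hS2ub⟩
    -- the maximally mixed state gives 0 ∈ S2
    have h0mem : (0 : ℝ) ∈ S2 := by
      refine ⟨1, fun _ => 1, fun _ _ => 0,
        fun _ => ((((2:ℝ)^n)⁻¹ : ℝ) : ℂ) • (1 : EuclideanSpace ℂ (Fin (2 ^ n)) →L[ℂ]
          EuclideanSpace ℂ (Fin (2 ^ n))), fun _ => zero_le_one, by simp,
        fun _ _ => by norm_num, fun _ => smul_one_isPositive _ (by positivity), ?_, ?_⟩
      · intro l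
        rw [trCLM_smul, trCLM_one]
        push_cast
        field_simp
      · have hz : ∀ x : Fin n,
            (trCLM (A x * (∑ _l : Fin 1, (((1:ℝ) * (0:ℝ) : ℝ) : ℂ) •
              (((((2:ℝ)^n)⁻¹ : ℝ) : ℂ) • (1 : EuclideanSpace ℂ (Fin (2 ^ n)) →L[ℂ]
                EuclideanSpace ℂ (Fin (2 ^ n))))))).re = 0 := by
          intro x
          have hc0 : (((1:ℝ) * (0:ℝ) : ℝ) : ℂ) = 0 := by norm_num
          have hzz : (0:ℂ) • (((((2:ℝ)^n)⁻¹ : ℝ) : ℂ) • (1 : EuclideanSpace ℂ (Fin (2 ^ n)) →L[ℂ]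
              EuclideanSpace ℂ (Fin (2 ^ n)))) = 0 := by
            ext w
            simp
          rw [Fin.sum_univ_one, hc0, hzz, mul_zero, trCLM_zero]
          simp
        rw [Finset.sum_congr rfl (fun x _ => hz x)]
        simp
    have hS2nonneg : (0:ℝ) ≤ sSup S2 := le_csSup hS2bdd h0mem
    have hS2le : sSup S2 ≤ Real.sqrt (2 * (n : ℝ)) := csSup_le ⟨0, h0mem⟩ hS2ub
    -- S1 is bounded above by n
    have hS1bdd : BddAbove S1 := by
      refine ⟨(n : ℝ), ?_⟩
      rintro r ⟨σ1, σ2, h1, h2, h12, rfl⟩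
      have hterm : ∀ x : Fin n, |(trCLM (A x * (σ1 x - σ2 x))).re| ≤ 1 := by
        intro x
        have hb1 := abs_re_trCLM_mul_le (A x) (σ1 x) (h1 x) 1
          (fun v => by rw [norm_A_apply A hsa hacr, one_mul])
        have hb2 := abs_re_trCLM_mul_le (A x) (σ2 x) (h2 x) 1
          (fun v => by rw [norm_A_apply A hsa hacr, one_mul])
        have htr12 : (trCLM (σ1 x)).re + (trCLM (σ2 x)).re = 1 := by
          rw [← Complex.add_re, h12 x, Complex.one_re]
        rw [mul_sub, trCLM_sub, Complex.sub_re]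
        calc |(trCLM (A x * σ1 x)).re - (trCLM (A x * σ2 x)).re|
            ≤ |(trCLM (A x * σ1 x)).re| + |(trCLM (A x * σ2 x)).re| := abs_sub _ _
          _ ≤ 1 * (trCLM (σ1 x)).re + 1 * (trCLM (σ2 x)).re := add_le_add hb1 hb2
          _ = 1 := by rw [one_mul, one_mul, htr12]
      calc |∑ x, (trCLM (A x * (σ1 x - σ2 x))).re|
          ≤ ∑ x, |(trCLM (A x * (σ1 x - σ2 x))).re| := Finset.abs_sum_le_sum_abs _ _
        _ ≤ ∑ _x : Fin n, (1:ℝ) := Finset.sum_le_sum fun x _ => hterm x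
        _ = n := by simp
    -- n ∈ S1
    have hnmem : (n : ℝ) ∈ S1 := by
      refine ⟨fun x => ((((2:ℝ)^n)⁻¹ * 2⁻¹ : ℝ) : ℂ) • (1 + ((1:ℝ) : ℂ) • A x),
        fun x => ((((2:ℝ)^n)⁻¹ * 2⁻¹ : ℝ) : ℂ) • (1 + ((-1:ℝ) : ℂ) • A x),
        fun x => pos_smul_one_add A hsa hacr x _ _ (by positivity) (by norm_num),
        fun x => pos_smul_one_add A hsa hacr x _ _ (by positivity) (by norm_num),
        ?_, ?_⟩
      · intro x
        rw [trCLM_smul, trCLM_smul, trCLM_add, trCLM_add, trCLM_smul, trCLM_smul,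
          trCLM_one]
        push_cast
        have h2n : ((2:ℂ)^n) ≠ 0 := by
          apply pow_ne_zero
          norm_num
        field_simp
        ring
      · have hdiff : ∀ x : Fin n,
            ((((2:ℝ)^n)⁻¹ * 2⁻¹ : ℝ) : ℂ) • (1 + ((1:ℝ) : ℂ) • A x) -
            ((((2:ℝ)^n)⁻¹ * 2⁻¹ : ℝ) : ℂ) • (1 + ((-1:ℝ) : ℂ) • A x) =
            ((2 : ℂ) ^ n)⁻¹ • A x := by
          intro x
          push_cast
          module
        rw [Finset.sum_congr rfl (fun x _ => by rw [hdiff x, diag_value A hacr x])]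
        simp
    have hS1sup : (n : ℝ) ≤ sSup S1 := le_csSup hS1bdd hnmem
    rcases Nat.eq_zero_or_pos n with hn0 | hn1
    · rw [ge_iff_le, hn0]
      rw [show ((0:ℕ) : ℝ) / 2 = 0 by norm_num, Real.sqrt_zero]
      apply div_nonneg _ hS2nonneg
      calc (0:ℝ) = ((0:ℕ) : ℝ) := by norm_num
        _ ≤ sSup S1 := by rw [← hn0] at *; exact hS1sup
    · -- an eigenvector of A 0 gives 1 ∈ S2
      have hd : 0 < 2 ^ n := pow_pos (by norm_num) n
      set x0 : Fin n := ⟨0, hn1⟩ with hx0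
      obtain ⟨v, μ, hv1, hvA, hμ⟩ := exists_unit_eigen A hsa hacr hd x0
      have hμabs : |μ| ≤ 1 := by nlinarith [abs_nonneg μ, sq_abs μ]
      have h1mem : (1 : ℝ) ∈ S2 := by
        refine ⟨1, fun _ => 1, fun _ y => if y = x0 then μ else 0,
          fun _ => ((innerSL ℂ) v).smulRight v, fun _ => zero_le_one, by simp,
          ?_, fun _ => proj_isPositive v, ?_, ?_⟩
        · intro l y
          by_cases h : y = x0 <;> simp [h, hμabs]
        · intro l
          rw [trCLM_proj, inner_self_eq_norm_sq_to_K, hv1]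
          norm_num
        · have hterm : ∀ x : Fin n,
              (trCLM (A x * (∑ _l : Fin 1, (((1:ℝ) * (if x = x0 then μ else 0) : ℝ) : ℂ) •
                ((innerSL ℂ) v).smulRight v))).re =
              (if x = x0 then (1:ℝ) else 0) := by
            intro x
            rw [Fin.sum_univ_one, one_mul, mul_smul_comm, trCLM_smul, trCLM_mul_proj]
            by_cases h : x = x0
            · subst h
              rw [if_pos rfl, if_pos rfl, hvA, inner_smul_right,
                inner_self_eq_norm_sq_to_K, hv1]
              push_cast
              rw [show ((μ:ℂ) * ((μ:ℂ) * 1^2)) = ((μ * μ : ℝ) : ℂ) by push_cast; ring, hμ]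
              simp
            · rw [if_neg h, if_neg h]
              simp
          rw [Finset.sum_congr rfl (fun x _ => hterm x), Finset.sum_ite_eq' Finset.univ x0]
          simp
      have hS2pos : (0:ℝ) < sSup S2 :=
        lt_of_lt_of_le one_pos (le_csSup hS2bdd h1mem)
      have hnpos : (0:ℝ) < (n:ℝ) := by exact_mod_cast hn1
      have hsqrt2n : (0:ℝ) < Real.sqrt (2 * (n:ℝ)) := Real.sqrt_pos.mpr (by nlinarith)
      have hsqrt : Real.sqrt ((n:ℝ) / 2) = (n:ℝ) / Real.sqrt (2 * (n:ℝ)) := by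
        rw [eq_div_iff (ne_of_gt hsqrt2n), ← Real.sqrt_mul (by positivity)]
        rw [show (n:ℝ) / 2 * (2 * (n:ℝ)) = (n:ℝ) ^ 2 by ring]
        exact Real.sqrt_sq (le_of_lt hnpos)
      rw [ge_iff_le, hsqrt]
      exact div_le_div₀ (le_trans (le_of_lt hnpos) hS1sup) hS1sup hS2pos hS2le
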